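/- arXiv:1907.03661 — 4 statements merged into one kernel-verified Lean document; each statement's English description precedes it below -/
import Mathlib

section
/- Let M be a von Neumann algebra and (α_t) a weak*-continuous one-parameter automorphism group of M by *-automorphisms. Then for each x ∈ M, the map ℝ → M, t ↦ α_t(x), is continuous for the σ-strong* topology: for every normal positive functional ω ∈ M_*⁺, both ⟨(α_t(x)−x)*(α_t(x)−x), ω⟩ → 0 and ⟨(α_t(x)−x)(α_t(x)−x)*, ω⟩ → 0 as t → 0. -/
open scoped ComplexOrder
open Filter Topology

/-!
Expanding the product, `ω ((αₜ x - x)* (αₜ x - x))` is the sum of `ω (αₜ (x* x))`,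
`ω (αₜ (x*) x)`, `ω (x* αₜ x)` and a constant; since `P` is closed under the left and right
actions of `M`, each term is a `P`-weakly continuous orbit map, and the sum vanishes at `t = 0`.
The second limit is the first one for `x*`.
-/

theorem star_map_sub_mul_map_sub {M F : Type*} [Ring M] [StarRing M] [FunLike F M M]
    [MulHomClass F M M] [StarHomClass F M M] (φ : F) (x : M) :
    star (φ x - x) * (φ x - x) = φ (star x * x) - φ (star x) * x - star x * φ x + star x * x := by
  rw [star_sub, map_mul, ← map_star]
  noncomm_ring

section OrbitContinuity

variable {𝕜 M X F : Type*} [CommRing 𝕜] [TopologicalSpace 𝕜] [Ring M] [TopologicalSpace M]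
  [Module 𝕜 M] [TopologicalSpace X] [FunLike F M M] {P : Set (M →L[𝕜] 𝕜)} {α : X → F}

theorem continuous_apply_orbit_mul
    (hmod : ∀ ω ∈ P, ∀ y : M, ∃ ω' ∈ P, ∀ a : M, ω' a = ω (a * y))
    (hcont : ∀ x : M, ∀ ω ∈ P, Continuous fun t : X => ω (α t x))
    {ω : M →L[𝕜] 𝕜} (hω : ω ∈ P) (x y : M) :
    Continuous fun t => ω (α t x * y) := by
  obtain ⟨ω', hω', hω'_eq⟩ := hmod ω hω y
  simpa only [hω'_eq] using hcont x ω' hω'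

theorem continuous_apply_mul_orbit
    (hmod : ∀ ω ∈ P, ∀ y : M, ∃ ω' ∈ P, ∀ a : M, ω' a = ω (y * a))
    (hcont : ∀ x : M, ∀ ω ∈ P, Continuous fun t : X => ω (α t x))
    {ω : M →L[𝕜] 𝕜} (hω : ω ∈ P) (x y : M) :
    Continuous fun t => ω (y * α t x) := by
  obtain ⟨ω', hω', hω'_eq⟩ := hmod ω hω y
  simpa only [hω'_eq] using hcont x ω' hω'

variable [IsTopologicalRing 𝕜] [StarRing M] [MulHomClass F M M] [StarHomClass F M M]

theorem continuous_apply_star_orbit_sub_mul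
    (hmod : ∀ ω ∈ P, ∀ y : M,
      (∃ ω' ∈ P, ∀ a : M, ω' a = ω (a * y)) ∧ (∃ ω' ∈ P, ∀ a : M, ω' a = ω (y * a)))
    (hcont : ∀ x : M, ∀ ω ∈ P, Continuous fun t : X => ω (α t x))
    {ω : M →L[𝕜] 𝕜} (hω : ω ∈ P) (x : M) :
    Continuous fun t => ω (star (α t x - x) * (α t x - x)) := by
  simp only [star_map_sub_mul_map_sub, map_add, map_sub]
  have h_right := continuous_apply_orbit_mul (fun ω hω y => (hmod ω hω y).1) hcont hω (star x) x
  have h_left := continuous_apply_mul_orbit (fun ω hω y => (hmod ω hω y).2) hcont hω x (star x)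
  exact (((hcont _ ω hω).sub h_right).sub h_left).add continuous_const

theorem tendsto_apply_star_orbit_sub_mul
    (hmod : ∀ ω ∈ P, ∀ y : M,
      (∃ ω' ∈ P, ∀ a : M, ω' a = ω (a * y)) ∧ (∃ ω' ∈ P, ∀ a : M, ω' a = ω (y * a)))
    (hcont : ∀ x : M, ∀ ω ∈ P, Continuous fun t : X => ω (α t x))
    {t₀ : X} (h₀ : ∀ x : M, α t₀ x = x) {ω : M →L[𝕜] 𝕜} (hω : ω ∈ P) (x : M) :
    Tendsto (fun t => ω (star (α t x - x) * (α t x - x))) (𝓝 t₀) (𝓝 0) := by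
  simpa [h₀] using (continuous_apply_star_orbit_sub_mul hmod hcont hω x).tendsto t₀

end OrbitContinuity

theorem stmt8_general {M : Type*} [NormedRing M] [StarRing M]
    [NormedAlgebra ℂ M]
    (P : Set (M →L[ℂ] ℂ))
    (hmod : ∀ ω ∈ P, ∀ x : M,
      (∃ ω' ∈ P, ∀ a : M, ω' a = ω (a * x)) ∧ (∃ ω'' ∈ P, ∀ a : M, ω'' a = ω (x * a)))
    (α : ℝ → M ≃⋆ₐ[ℂ] M)
    (h0 : ∀ x : M, α 0 x = x)
    (hcont : ∀ x : M, ∀ ω ∈ P, Continuous fun t : ℝ => ω (α t x)) :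
    ∀ ω ∈ P, (∀ a : M, 0 ≤ ω (star a * a)) →
      ∀ x : M,
        Tendsto (fun t : ℝ => ω (star (α t x - x) * (α t x - x))) (𝓝 0) (𝓝 0) ∧
        Tendsto (fun t : ℝ => ω ((α t x - x) * star (α t x - x))) (𝓝 0) (𝓝 0) := by
  intro ω hω _ x
  refine ⟨tendsto_apply_star_orbit_sub_mul hmod hcont h0 hω x, ?_⟩
  have h_star (t : ℝ) : α t (star x) - star x = star (α t x - x) := by
    rw [star_sub, map_star]
  simpa only [h_star, star_star] using tendsto_apply_star_orbit_sub_mul hmod hcont h0 hω (star x)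

/-- For a weak*-continuous one-parameter automorphism group `(αₜ)` of a von Neumann
algebra `M` (here: a C*-algebra together with a separating family `P` of (normal,
positive where required) functionals, closed under the module actions of `M`, against
which all orbit maps are continuous), each orbit map `t ↦ αₜ(x)` is `σ`-strong*
continuous: for every positive `ω ∈ P` and `x ∈ M`, both
`ω((αₜ(x)-x)*(αₜ(x)-x)) → 0` and `ω((αₜ(x)-x)(αₜ(x)-x)*) → 0` as `t → 0`. -/
theorem stmt8 {M : Type*} [NormedRing M] [StarRing M] [CStarRing M]
    [NormedAlgebra ℂ M] [CompleteSpace M] [StarModule ℂ M]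
    (P : Set (M →L[ℂ] ℂ))
    (hmod : ∀ ω ∈ P, ∀ x : M,
      (∃ ω' ∈ P, ∀ a : M, ω' a = ω (a * x)) ∧ (∃ ω'' ∈ P, ∀ a : M, ω'' a = ω (x * a)))
    (α : ℝ → M ≃⋆ₐ[ℂ] M)
    (h0 : ∀ x : M, α 0 x = x)
    (hgrp : ∀ t s : ℝ, ∀ x : M, α t (α s x) = α (t + s) x)
    (hcont : ∀ x : M, ∀ ω ∈ P, Continuous fun t : ℝ => ω (α t x)) :
    ∀ ω ∈ P, (∀ a : M, 0 ≤ ω (star a * a)) →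
      ∀ x : M,
        Tendsto (fun t : ℝ => ω (star (α t x - x) * (α t x - x))) (𝓝 0) (𝓝 0) ∧
        Tendsto (fun t : ℝ => ω ((α t x - x) * star (α t x - x))) (𝓝 0) (𝓝 0) :=
  stmt8_general P hmod α h0 hcont
end

section
/- Let φ ∈ L¹(ℝ) be the Gaussian φ(s) = (n/√π) exp(−n²s²) for a fixed n > 0, and let f : ℝ → ℂ be a bounded continuous function with φ * f = 0. Then f = 0. -/
/-!
Write `g(s) = f(s) e^{-n²s²}`. Expanding the square in `e^{-n²(t-s)²}` turns `φ * f = 0` into the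
vanishing of the two-sided Laplace transform `L g(z) = ∫ g(s) e^{zs} ds` at every real `z = 2n²t`.
Since `g` decays like a Gaussian, `L g` is entire, so by the identity theorem it vanishes on the
imaginary axis too, where it is the Fourier transform of `g`. Fourier inversion gives `g = 0`,
hence `f = 0`.
-/

open MeasureTheory Complex Filter Topology
open scoped FourierTransform Real

noncomputable def bilateralLaplace (g : ℝ → ℂ) (z : ℂ) : ℂ :=
  ∫ s : ℝ, g s * cexp (z * s)

lemma norm_cexp_mul_ofReal (z : ℂ) (s : ℝ) : ‖cexp (z * s)‖ = Real.exp (z.re * s) := by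
  rw [Complex.norm_exp, re_mul_ofReal]

lemma abs_mul_exp_le_of_abs_sub_le {x y : ℝ} (hxy : |y - x| ≤ 1) (s : ℝ) :
    |s| * Real.exp (y * s) ≤ Real.exp ((x + 2) * s) + Real.exp ((x - 2) * s) := by
  have hs : |s| ≤ Real.exp |s| := by linarith [Real.add_one_le_exp |s|]
  have hys : y * s ≤ x * s + |s| := by
    have : (y - x) * s ≤ |y - x| * |s| := abs_mul (y - x) s ▸ le_abs_self _
    nlinarith [abs_nonneg s]
  calc |s| * Real.exp (y * s) ≤ Real.exp |s| * Real.exp (x * s + |s|) := by gcongr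
    _ = Real.exp (x * s) * Real.exp |2 * s| := by
        rw [← Real.exp_add, ← Real.exp_add, abs_mul, abs_two]; ring_nf
    _ ≤ Real.exp (x * s) * (Real.exp (2 * s) + Real.exp (-(2 * s))) := by
        gcongr; exact apply_abs_le_add_of_nonneg (fun a => (Real.exp_pos a).le) _
    _ = Real.exp ((x + 2) * s) + Real.exp ((x - 2) * s) := by
        rw [mul_add, ← Real.exp_add, ← Real.exp_add]; ring_nf

section BilateralLaplace

variable {g : ℝ → ℂ}

lemma integrable_mul_cexp_of_forall_ofReal
    (hg : ∀ x : ℝ, Integrable fun s : ℝ => g s * cexp (x * s)) (z : ℂ) :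
    Integrable fun s : ℝ => g s * cexp (z * s) := by
  have hmeas : AEStronglyMeasurable g := by simpa using (hg 0).aestronglyMeasurable
  refine (hg z.re).norm.mono' (hmeas.mul (by fun_prop : Continuous _).aestronglyMeasurable)
    (ae_of_all _ fun s => ?_)
  simp only [norm_mul, norm_cexp_mul_ofReal, ofReal_re, le_refl]

theorem hasDerivAt_bilateralLaplace
    (hg : ∀ x : ℝ, Integrable fun s : ℝ => g s * cexp (x * s)) (z₀ : ℂ) :
    HasDerivAt (bilateralLaplace g) (∫ s : ℝ, g s * (cexp (z₀ * s) * s)) z₀ := by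
  set x := z₀.re
  have hmeas : AEStronglyMeasurable g := by simpa using (hg 0).aestronglyMeasurable
  refine (hasDerivAt_integral_of_dominated_loc_of_deriv_le (Metric.ball_mem_nhds z₀ one_pos)
    (F' := fun z s => g s * (cexp (z * s) * s))
    (bound := fun s => ‖g s * cexp (↑(x + 2) * s)‖ + ‖g s * cexp (↑(x - 2) * s)‖)
    (.of_forall fun z => (integrable_mul_cexp_of_forall_ofReal hg z).aestronglyMeasurable)
    (integrable_mul_cexp_of_forall_ofReal hg z₀)
    (hmeas.mul (by fun_prop : Continuous fun s : ℝ => cexp (z₀ * s) * s).aestronglyMeasurable)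
    (ae_of_all _ fun s z hz => ?_) ((hg _).norm.add (hg _).norm)
    (ae_of_all _ fun s z _ => ?_)).2
  · have hre : |z.re - x| ≤ 1 := by
      rw [← sub_re]
      exact (abs_re_le_norm _).trans (mem_ball_iff_norm.1 hz).le
    simp only [norm_mul, norm_cexp_mul_ofReal, ofReal_re, norm_real, Real.norm_eq_abs, ← mul_add]
    rw [mul_comm (Real.exp _)]
    gcongr
    exact abs_mul_exp_le_of_abs_sub_le hre s
  · exact ((hasDerivAt_mul_const (s : ℂ)).cexp).const_mul (g s)

theorem differentiable_bilateralLaplace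
    (hg : ∀ x : ℝ, Integrable fun s : ℝ => g s * cexp (x * s)) :
    Differentiable ℂ (bilateralLaplace g) :=
  fun z => (hasDerivAt_bilateralLaplace hg z).differentiableAt

theorem bilateralLaplace_eq_zero_of_forall_ofReal
    (hg : ∀ x : ℝ, Integrable fun s : ℝ => g s * cexp (x * s))
    (h0 : ∀ x : ℝ, bilateralLaplace g x = 0) :
    bilateralLaplace g = 0 := by
  have hfreq : ∃ᶠ z in 𝓝[≠] (0 : ℂ), bilateralLaplace g z = 0 := by
    have hofReal : Tendsto ((↑) : ℝ → ℂ) (𝓝[≠] 0) (𝓝[≠] 0) :=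
      continuous_ofReal.continuousWithinAt.tendsto_nhdsWithin fun x hx => by simpa using hx
    exact hofReal.frequently (.of_forall h0)
  funext z
  exact ((differentiable_bilateralLaplace hg).differentiableOn.analyticOnNhd isOpen_univ
    |>.eqOn_zero_of_preconnected_of_frequently_eq_zero isPreconnected_univ
      (Set.mem_univ 0) hfreq) (Set.mem_univ z)

theorem fourier_eq_bilateralLaplace (g : ℝ → ℂ) (w : ℝ) :
    𝓕 g w = bilateralLaplace g (-2 * π * w * I) := by
  rw [Real.fourier_real_eq_integral_exp_smul, bilateralLaplace]
  congr 1 with s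
  rw [smul_eq_mul, mul_comm]
  push_cast
  ring_nf

theorem eq_zero_of_bilateralLaplace_ofReal_eq_zero (hgc : Continuous g)
    (hg : ∀ x : ℝ, Integrable fun s : ℝ => g s * cexp (x * s))
    (h0 : ∀ x : ℝ, bilateralLaplace g x = 0) :
    g = 0 := by
  have hF : 𝓕 g = 0 := funext fun w => by
    rw [fourier_eq_bilateralLaplace, bilateralLaplace_eq_zero_of_forall_ofReal hg h0, Pi.zero_apply,
      Pi.zero_apply]
  rw [← hgc.fourierInv_fourier_eq (by simpa using hg 0) (by rw [hF]; exact integrable_zero _ _ _),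
    hF]
  ext
  simp [Real.fourierInv_eq]

end BilateralLaplace

lemma integrable_mul_gaussian_mul_cexp {f : ℝ → ℂ} {C b : ℝ} (hb : 0 < b)
    (hf : AEStronglyMeasurable f) (hC : ∀ t, ‖f t‖ ≤ C) (c : ℂ) :
    Integrable fun s : ℝ => f s * cexp (-b * s ^ 2) * cexp (c * s) := by
  have hexp : Integrable fun s : ℝ => cexp (-(b : ℂ) * s ^ 2 + c * s + 0) :=
    integrable_cexp_quadratic (by simpa using hb) c 0
  simp_rw [mul_assoc, ← Complex.exp_add]
  simpa using hexp.bdd_mul hf (ae_of_all _ hC)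

lemma gaussian_convolution_eq_bilateralLaplace (n : ℝ) (f : ℝ → ℂ) (t : ℝ) :
    ∫ s : ℝ, ((n / √π * Real.exp (-(n ^ 2) * (t - s) ^ 2) : ℝ) : ℂ) * f s
      = (n / √π * Real.exp (-(n ^ 2) * t ^ 2) : ℝ) *
        bilateralLaplace (fun s => f s * cexp (-(n ^ 2 : ℝ) * s ^ 2))
          ((2 * n ^ 2 * t : ℝ) : ℂ) := by
  rw [bilateralLaplace, ← integral_const_mul]
  congr 1 with s
  push_cast [ofReal_exp]
  rw [mul_assoc (f s), ← Complex.exp_add,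
    show -(n : ℂ) ^ 2 * (t - s) ^ 2 = -n ^ 2 * t ^ 2 + (-n ^ 2 * s ^ 2 + 2 * n ^ 2 * t * s) by
      ring,
    Complex.exp_add]
  ring

/-- If the convolution of the Gaussian `φ(s) = (n/√π) exp(-n²s²)` (for some fixed `n > 0`)
with a bounded continuous function `f : ℝ → ℂ` vanishes identically, then `f = 0`. -/
theorem stmt10 (n : ℝ) (hn : 0 < n) (f : ℝ → ℂ)
    (hfc : Continuous f) (hfb : ∃ C : ℝ, ∀ t : ℝ, ‖f t‖ ≤ C)
    (hconv : ∀ t : ℝ,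
      ∫ s : ℝ, ((n / Real.sqrt Real.pi * Real.exp (-(n ^ 2) * (t - s) ^ 2) : ℝ) : ℂ) * f s
        = 0) :
    ∀ t : ℝ, f t = 0 := by
  obtain ⟨C, hC⟩ := hfb
  set g : ℝ → ℂ := fun s => f s * cexp (-(n ^ 2 : ℝ) * s ^ 2)
  have hg (x : ℝ) : Integrable fun s : ℝ => g s * cexp (x * s) :=
    integrable_mul_gaussian_mul_cexp (pow_pos hn 2) hfc.aestronglyMeasurable hC x
  have hLg (x : ℝ) : bilateralLaplace g x = 0 := by
    have h := hconv (x / (2 * n ^ 2))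
    rw [gaussian_convolution_eq_bilateralLaplace, mul_div_cancel₀ _ (by positivity)] at h
    exact (mul_eq_zero.1 h).resolve_left (by norm_cast; positivity)
  have hg0 := eq_zero_of_bilateralLaplace_ofReal_eq_zero (by fun_prop) hg hLg
  intro t
  simpa [g, Complex.exp_ne_zero] using congrFun hg0 t
end

section
/- Let (α_t) be a norm-continuous one-parameter isometry group on a Banach space E, fix n > 0, and define R_n(x) = (n/√π) ∫_ℝ exp(−n²t²) α_t(x) dt. Then for each x ∈ E, x lies in the closed linear span of the orbit {α_t(R_n(x)) : t ∈ ℝ}; in other words, any μ ∈ E* vanishing on all α_t(R_n(x)) vanishes on x. -/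
/-!
For `f t = μ (αₜ x)`, continuous and bounded, the hypothesis says that the Gaussian
convolution `g = e^{-n²(·)²} * f` vanishes identically. Pairing `g` with a modulated Gaussian
`φ t = e^{-n² t² + 2 c t}` and using Fubini gives `∫ (e^{-n²(·)²} * φ) f = ∫ φ g = 0`. The
convolution of two Gaussians is again a modulated Gaussian, so with `c = -2πiξ` this says that
the Fourier transform of `u ↦ e^{-n² u² / 2} f u` vanishes at `ξ`. Fourier inversion forces
`f = 0`, and `f 0 = μ x`.
-/

open MeasureTheory

/-- The Gaussian smearing operator `Rₙ` of a one-parameter isometry group. -/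
noncomputable def smear11 {E : Type*} [NormedAddCommGroup E] [NormedSpace ℂ E]
    [CompleteSpace E] (α : ℝ → E →L[ℂ] E) (n : ℝ) (v : E) : E :=
  ∫ t : ℝ, (n / Real.sqrt Real.pi * Real.exp (-(n ^ 2) * t ^ 2)) • α t v

open Complex Real FourierTransform

noncomputable def gaussConv (b : ℝ) (f : ℝ → ℂ) (t : ℝ) : ℂ :=
  ∫ u : ℝ, cexp (-b * (t - u) ^ 2) * f u

theorem gaussConv_cexp_neg_mul_sq_add_mul {b : ℝ} (hb : 0 < b) (c : ℂ) (u : ℝ) :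
    gaussConv b (fun t => cexp (-b * t ^ 2 + 2 * c * t)) u =
      (π / (2 * b)) ^ (1 / 2 : ℂ) * cexp (c ^ 2 / (2 * b)) *
        cexp (-(b / 2) * u ^ 2 + c * u) := by
  have hb' : (b : ℂ) ≠ 0 := by exact_mod_cast hb.ne'
  have hquad : (-(2 * b : ℂ)).re < 0 := by simpa using hb
  have hexp : ∀ t : ℝ, cexp (-b * (u - t) ^ 2) * cexp (-b * t ^ 2 + 2 * c * t) =
      cexp (-(2 * b) * t ^ 2 + (2 * b * u + 2 * c) * t + -b * u ^ 2) := fun t => by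
    rw [← Complex.exp_add]; ring_nf
  rw [gaussConv, integral_congr_ae (.of_forall hexp), integral_cexp_quadratic hquad,
    neg_neg, mul_assoc _ (cexp _), ← Complex.exp_add]
  congr 2
  field_simp
  ring

theorem integral_gaussConv_mul {b : ℝ} (hb : 0 < b) {φ f : ℝ → ℂ} (hφ : Integrable φ)
    (hf : AEStronglyMeasurable f) {M : ℝ} (hM : ∀ u, ‖f u‖ ≤ M) :
    ∫ u, gaussConv b φ u * f u = ∫ t, φ t * gaussConv b f t := by
  have hkernel : Integrable (fun x : ℝ => cexp (-b * x ^ 2)) :=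
    integrable_cexp_neg_mul_sq (by simpa using hb)
  have hint : Integrable (Function.uncurry fun u t : ℝ => cexp (-b * (u - t) ^ 2) * φ t * f u)
      (volume.prod volume) := by
    have := (hφ.convolution_integrand (ContinuousLinearMap.mul ℂ ℂ) hkernel).mul_bdd
      hf.comp_fst (.of_forall fun p => hM p.1)
    refine this.congr (.of_forall fun p => ?_)
    simp only [ContinuousLinearMap.mul_apply', Function.uncurry_def, ofReal_sub]
    ring
  calc ∫ u, gaussConv b φ u * f u
      = ∫ u : ℝ, ∫ t : ℝ, cexp (-b * (u - t) ^ 2) * φ t * f u := by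
        simp_rw [gaussConv, integral_mul_const]
    _ = ∫ t : ℝ, ∫ u : ℝ, cexp (-b * (u - t) ^ 2) * φ t * f u :=
        integral_integral_swap hint
    _ = ∫ t, φ t * gaussConv b f t := by
        refine integral_congr_ae (.of_forall fun t => ?_)
        simp only [gaussConv, ← integral_const_mul]
        refine integral_congr_ae (.of_forall fun u => ?_)
        dsimp only
        rw [← neg_sub (t : ℂ), neg_sq]
        ring

theorem fourier_cexp_mul_eq_zero_of_gaussConv_eq_zero {b : ℝ} (hb : 0 < b) {f : ℝ → ℂ}
    (hf : AEStronglyMeasurable f) {M : ℝ} (hM : ∀ u, ‖f u‖ ≤ M)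
    (hK : ∀ t, gaussConv b f t = 0) :
    𝓕 (fun u : ℝ => cexp (-(b / 2) * u ^ 2) * f u) = 0 := by
  ext ξ : 1
  set c : ℂ := ↑(-2 * π * ξ) * I
  have hφ : Integrable (fun t : ℝ => cexp (-b * t ^ 2 + 2 * c * t)) := by
    simpa using integrable_cexp_quadratic (b := b) (by simpa using hb) (2 * c) 0
  have hpair := integral_gaussConv_mul hb hφ hf hM
  simp only [hK, mul_zero, integral_zero, gaussConv_cexp_neg_mul_sq_add_mul hb] at hpair
  simp only [mul_assoc, integral_const_mul] at hpair
  rw [← mul_assoc] at hpair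
  have hC : (π / (2 * b) : ℂ) ^ (1 / 2 : ℂ) * cexp (c ^ 2 / (2 * b)) ≠ 0 := by
    refine mul_ne_zero ?_ (Complex.exp_ne_zero _)
    simp [cpow_eq_zero_iff, hb.ne', pi_ne_zero]
  rw [fourier_real_eq_integral_exp_smul, Pi.zero_apply, ← (mul_eq_zero.1 hpair).resolve_left hC]
  refine integral_congr_ae (.of_forall fun u => ?_)
  simp only [smul_eq_mul, c, ← mul_assoc, ← Complex.exp_add]
  push_cast
  ring_nf

theorem eq_zero_of_gaussConv_eq_zero {b : ℝ} (hb : 0 < b) {f : ℝ → ℂ} (hf : Continuous f)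
    {M : ℝ} (hM : ∀ u, ‖f u‖ ≤ M) (hK : ∀ t, gaussConv b f t = 0) : f = 0 := by
  set h : ℝ → ℂ := fun u => cexp (-(b / 2) * u ^ 2) * f u
  have hh : Integrable h := (integrable_cexp_neg_mul_sq (by simpa using hb)).mul_bdd
    hf.aestronglyMeasurable (.of_forall hM)
  have hFh : 𝓕 h = 0 :=
    fourier_cexp_mul_eq_zero_of_gaussConv_eq_zero hb hf.aestronglyMeasurable hM hK
  have hFh_int : Integrable (𝓕 h) := by
    rw [hFh]
    exact integrable_zero _ _ _
  have h0 : h = 0 := by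
    rw [← (by fun_prop : Continuous h).fourierInv_fourier_eq hh hFh_int, hFh]
    ext v
    simp [Real.fourierInv_eq]
  funext u
  simpa [h, Complex.exp_ne_zero] using congrFun h0 u

theorem apply_smear11_eq_mul_gaussConv {E : Type*} [NormedAddCommGroup E] [NormedSpace ℂ E]
    [CompleteSpace E] {α : ℝ → E →L[ℂ] E}
    (hiso : ∀ t : ℝ, ∀ x : E, ‖α t x‖ = ‖x‖)
    (hgrp : ∀ t s : ℝ, ∀ x : E, α t (α s x) = α (t + s) x)
    (hcont : ∀ x : E, Continuous fun t : ℝ => α t x) {n : ℝ} (hn : n ≠ 0) (x : E)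
    (μ : E →L[ℂ] ℂ) (t : ℝ) :
    μ (α t (smear11 α n x)) =
      (n / √π : ℝ) * gaussConv (n ^ 2) (fun u => μ (α u x)) t := by
  set w : ℝ → ℝ := fun s => n / √π * rexp (-(n ^ 2) * s ^ 2)
  have hint : Integrable (fun s => w s • α s x) :=
    ((integrable_exp_neg_mul_sq (by positivity)).const_mul _).smul_bdd ‖x‖
      (hcont x).aestronglyMeasurable (.of_forall fun s => (hiso s x).le)
  calc μ (α t (smear11 α n x))
      = ∫ s, w s • μ (α (t + s) x) := by
        rw [smear11, ← ContinuousLinearMap.comp_apply,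
          ← ContinuousLinearMap.integral_comp_comm _ hint]
        simp [hgrp]
    _ = ∫ u, w (u - t) • μ (α u x) := by
        rw [← integral_add_left_eq_self (fun u => w (u - t) • μ (α u x)) t]
        simp
    _ = (n / √π : ℝ) * gaussConv (n ^ 2) (fun u => μ (α u x)) t := by
        rw [gaussConv, ← integral_const_mul]
        refine integral_congr_ae (.of_forall fun u => ?_)
        simp only [w, real_smul]
        push_cast
        ring_nf

/-- For a norm-continuous one-parameter isometry group `(αₜ)` and `n > 0`, every `x` lies
in the closed linear span of the orbit `{αₜ(Rₙ(x)) : t ∈ ℝ}`: any functional vanishing on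
all `αₜ(Rₙ(x))` vanishes on `x`. -/
theorem stmt11 {E : Type*} [NormedAddCommGroup E] [NormedSpace ℂ E] [CompleteSpace E]
    (α : ℝ → E →L[ℂ] E)
    (hiso : ∀ t : ℝ, ∀ x : E, ‖α t x‖ = ‖x‖)
    (h0 : ∀ x : E, α 0 x = x)
    (hgrp : ∀ t s : ℝ, ∀ x : E, α t (α s x) = α (t + s) x)
    (hcont : ∀ x : E, Continuous fun t : ℝ => α t x)
    (n : ℝ) (hn : 0 < n) (x : E)
    (μ : E →L[ℂ] ℂ)
    (hμ : ∀ t : ℝ, μ (α t (smear11 α n x)) = 0) :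
    μ x = 0 := by
  have hbound : ∀ u, ‖μ (α u x)‖ ≤ ‖μ‖ * ‖x‖ := fun u =>
    (μ.le_opNorm _).trans_eq (by rw [hiso])
  have hconv : ∀ t, gaussConv (n ^ 2) (fun u => μ (α u x)) t = 0 := fun t => by
    have hnorm : ((n / √π : ℝ) : ℂ) ≠ 0 :=
      ofReal_ne_zero.2 (div_ne_zero hn.ne' (Real.sqrt_ne_zero'.2 pi_pos))
    have hzero := hμ t
    rw [apply_smear11_eq_mul_gaussConv hiso hgrp hcont hn.ne' x μ t] at hzero
    exact (mul_eq_zero.1 hzero).resolve_left hnorm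
  have horbit := eq_zero_of_gaussConv_eq_zero (by positivity) (μ.continuous.comp (hcont x))
    hbound hconv
  simpa [h0] using congrFun horbit 0
end

section
/- Let E be a Banach space, F ⊆ E a closed subspace, and (α_t) a norm-continuous one-parameter isometry group on E with α_t(F) ⊆ F for all t. Suppose there exists a norm-one linear projection e : E* → F⊥. Then there exists a norm-one projection p : E* → F⊥ satisfying p ∘ α_t* = α_t* ∘ p for all t ∈ ℝ. -/
/-!
Every abelian group `G` is amenable (Dixmier): the Hahn–Banach theorem gives a real functional
on `ℓ^∞(G)` dominated by the sublinear functional `f ↦ inf_c sup_x 𝔼ᵢ re f (x + cᵢ)`, which is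
`≤ 0` on every difference `f - f (· + s)` because averaging it along `0, s, …, (n - 1) • s`
telescopes to `O(1 / n)`. Its complex-linear extension is an invariant mean `m`.

Averaging the conjugates `α₋ₜ* e αₜ*` against `m`, i.e. `⟨p μ, x⟩ = m (t ↦ e (μ ∘ αₜ) (α₋ₜ x))`,
yields a contraction that is still a projection onto `F^⊥` (as `F` is invariant) and commutes
with every `αₛ*`, because conjugating by `αₛ*` only translates the integrand.
-/

open scoped BigOperators ENNReal
open Finset Set Filter RCLike

section UpperMean

variable {G : Type*} [AddCommGroup G]

noncomputable def translateAvgSup {ι : Type*} [Fintype ι] (c : ι → G) (f : G → ℝ) : ℝ :=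
  ⨆ x, 𝔼 i, f (x + c i)

/-- Dixmier's sublinear functional; it is meaningful only for bounded `f`. -/
noncomputable def upperMean (f : G → ℝ) : ℝ :=
  ⨅ c : Σ n : ℕ, Fin (n + 1) → G, translateAvgSup c.2 f

variable {ι κ : Type*} [Fintype ι] [Nonempty ι] [Fintype κ] [Nonempty κ] {f g : G → ℝ} {C D : ℝ}

lemma expect_le_translateAvgSup (hf : ∀ x, f x ≤ C) (c : ι → G) (x : G) :
    𝔼 i, f (x + c i) ≤ translateAvgSup c f :=
  le_ciSup ⟨C, by
    rintro _ ⟨y, rfl⟩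
    exact Finset.expect_le univ_nonempty fun i _ => hf (y + c i)⟩ x

omit [Nonempty ι] in
lemma translateAvgSup_le {c : ι → G} (h : ∀ x, 𝔼 i, f (x + c i) ≤ C) :
    translateAvgSup c f ≤ C :=
  ciSup_le h

omit [Nonempty ι] [Nonempty κ] in
lemma translateAvgSup_comp_equiv (e : κ ≃ ι) (c : ι → G) :
    translateAvgSup (c ∘ e) f = translateAvgSup c f := by
  simp only [translateAvgSup]
  exact iSup_congr fun x =>
    Fintype.expect_equiv e (fun k => f (x + c (e k))) (fun i => f (x + c i)) fun _ => rfl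

lemma upperMean_le_translateAvgSup (hf : ∀ x, |f x| ≤ C) (c : ι → G) :
    upperMean f ≤ translateAvgSup c f := by
  obtain ⟨n, hn⟩ := Nat.exists_eq_succ_of_ne_zero (Fintype.card_ne_zero (α := ι))
  let e := Fintype.equivFinOfCardEq hn
  have hlow : ∀ {k : ℕ} (d : Fin (k + 1) → G), -C ≤ translateAvgSup d f := fun d =>
    (le_expect univ_nonempty fun i _ => neg_le_of_abs_le (hf _)).trans
      (expect_le_translateAvgSup (fun x => (abs_le.1 (hf x)).2) d 0)
  have hbdd : BddBelow (range fun d : Σ k : ℕ, Fin (k + 1) → G => translateAvgSup d.2 f) :=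
    ⟨-C, by rintro _ ⟨d, rfl⟩; exact hlow d.2⟩
  rw [← translateAvgSup_comp_equiv e.symm c]
  exact ciInf_le hbdd (⟨n, c ∘ e.symm⟩ : Σ k : ℕ, Fin (k + 1) → G)

lemma upperMean_le_of_le (hf : ∀ x, |f x| ≤ C) (h : ∀ x, f x ≤ D) : upperMean f ≤ D :=
  (upperMean_le_translateAvgSup hf fun _ : Fin 1 => (0 : G)).trans
    (translateAvgSup_le fun x => by simpa using h x)

lemma upperMean_smul (f : G → ℝ) {t : ℝ} (ht : 0 ≤ t) :
    upperMean (fun x => t * f x) = t * upperMean f := by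
  simp only [upperMean, translateAvgSup, Real.mul_iInf_of_nonneg ht, Real.mul_iSup_of_nonneg ht,
    mul_expect]

lemma upperMean_add_le_translateAvgSup_add (hf : ∀ x, |f x| ≤ C) (hg : ∀ x, |g x| ≤ D)
    (c : ι → G) (d : κ → G) :
    upperMean (fun x => f x + g x) ≤ translateAvgSup c f + translateAvgSup d g := by
  have hfg : ∀ x, |f x + g x| ≤ C + D := fun x =>
    (abs_add_le _ _).trans (add_le_add (hf x) (hg x))
  refine (upperMean_le_translateAvgSup hfg fun p : ι × κ => c p.1 + d p.2).trans
    (translateAvgSup_le fun x => ?_)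
  calc 𝔼 p : ι × κ, (f (x + (c p.1 + d p.2)) + g (x + (c p.1 + d p.2)))
      = 𝔼 j, 𝔼 i, f (x + d j + c i) + 𝔼 i, 𝔼 j, g (x + c i + d j) := by
        rw [← univ_product_univ]
        simp only [expect_add_distrib]
        rw [expect_product' (f := fun i j => f (x + (c i + d j))),
          expect_product' (f := fun i j => g (x + (c i + d j))), expect_comm (univ : Finset ι)]
        simp only [add_assoc, add_comm (d _) (c _)]
    _ ≤ translateAvgSup c f + translateAvgSup d g :=
        add_le_add
          (expect_le univ_nonempty fun j _ =>
            expect_le_translateAvgSup (fun x => (abs_le.1 (hf x)).2) c _)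
          (expect_le univ_nonempty fun i _ =>
            expect_le_translateAvgSup (fun x => (abs_le.1 (hg x)).2) d _)

lemma upperMean_add_le (hf : ∀ x, |f x| ≤ C) (hg : ∀ x, |g x| ≤ D) :
    upperMean (fun x => f x + g x) ≤ upperMean f + upperMean g := by
  have h : ∀ c : Σ n : ℕ, Fin (n + 1) → G,
      upperMean (fun x => f x + g x) - translateAvgSup c.2 f ≤ upperMean g :=
    fun c => le_ciInf fun d => by
      linarith [upperMean_add_le_translateAvgSup_add hf hg c.2 d.2]
  have : upperMean (fun x => f x + g x) - upperMean g ≤ upperMean f :=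
    le_ciInf fun c => by linarith [h c]
  linarith

lemma expect_sub_add_nsmul (h : G → ℝ) (s x : G) (n : ℕ) :
    𝔼 i : Fin n, (h (x + (i : ℕ) • s) - h (x + (i : ℕ) • s + s)) = (h x - h (x + n • s)) / n := by
  rw [Fintype.expect_eq_sum_div_card, Fintype.card_fin,
    Fin.sum_univ_eq_sum_range (fun i => h (x + i • s) - h (x + i • s + s)) n]
  simp_rw [add_assoc, ← succ_nsmul]
  rw [Finset.sum_range_sub' (fun i => h (x + i • s)) n, zero_nsmul, add_zero]

lemma upperMean_sub_translate_nonpos (hf : ∀ x, |f x| ≤ C) (s : G) :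
    upperMean (fun x => f x - f (x + s)) ≤ 0 := by
  have hdiff : ∀ x y, |f x - f y| ≤ 2 * C := fun x y => by
    linarith [abs_sub (f x) (f y), hf x, hf y]
  refine ge_of_tendsto (tendsto_const_div_atTop_nhds_zero_nat (2 * C))
    (eventually_atTop.2 ⟨1, fun n hn => ?_⟩)
  have : NeZero n := ⟨by omega⟩
  refine (upperMean_le_translateAvgSup (fun x => hdiff x (x + s))
    fun i : Fin n => (i : ℕ) • s).trans (translateAvgSup_le fun x => ?_)
  rw [expect_sub_add_nsmul f s x n]
  gcongr
  exact (le_abs_self _).trans (hdiff _ _)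

end UpperMean

section InvariantMean

variable (𝕜 G : Type*) [RCLike 𝕜] [AddCommGroup G]

structure IsInvariantMean (m : lp (fun _ : G => 𝕜) ∞ →L[𝕜] 𝕜) : Prop where
  norm_le_one : ‖m‖ ≤ 1
  map_const : ∀ (f : lp (fun _ : G => 𝕜) ∞) (c : 𝕜), (∀ t, f t = c) → m f = c
  map_translate : ∀ (f g : lp (fun _ : G => 𝕜) ∞) (s : G), (∀ t, g t = f (t + s)) → m g = m f

def IsDominatedByUpperMean (Λ : lp (fun _ : G => 𝕜) ∞ →ₗ[ℝ] ℝ) : Prop :=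
  ∀ f, Λ f ≤ upperMean fun t => re (f t)

variable {𝕜 G}

omit [AddCommGroup G] in
lemma lp.abs_re_apply_le_norm (f : lp (fun _ : G => 𝕜) ∞) (t : G) : |re (f t)| ≤ ‖f‖ :=
  (abs_re_le_norm _).trans (lp.norm_apply_le_norm ENNReal.top_ne_zero f t)

variable (𝕜 G) in
lemma exists_isDominatedByUpperMean :
    ∃ Λ : lp (fun _ : G => 𝕜) ∞ →ₗ[ℝ] ℝ, IsDominatedByUpperMean 𝕜 G Λ := by
  have hsmul : ∀ c : ℝ, 0 ≤ c → ∀ f : lp (fun _ : G => 𝕜) ∞,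
      (upperMean fun t => re ((c • f) t)) = c * upperMean fun t => re (f t) := fun c hc f => by
    simpa [smul_re] using upperMean_smul (fun t => re (f t)) hc
  obtain ⟨Λ, -, hΛ⟩ := exists_extension_of_le_sublinear ⟨⊥, 0⟩
    (fun f : lp (fun _ : G => 𝕜) ∞ => upperMean fun t => re (f t))
    (fun c hc => hsmul c hc.le)
    (fun f g => by
      simpa using upperMean_add_le (lp.abs_re_apply_le_norm f) (lp.abs_re_apply_le_norm g))
    (fun ⟨f, hf⟩ => by
      rw [Submodule.mem_bot] at hf
      subst hf
      simpa using (upperMean_smul (fun _ : G => (0 : ℝ)) le_rfl).ge)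
  exact ⟨Λ, hΛ⟩

namespace IsDominatedByUpperMean

variable {Λ : lp (fun _ : G => 𝕜) ∞ →ₗ[ℝ] ℝ} (hΛ : IsDominatedByUpperMean 𝕜 G Λ)
include hΛ

lemma apply_le_of_forall_re_le {f : lp (fun _ : G => 𝕜) ∞} {C : ℝ} (h : ∀ t, re (f t) ≤ C) :
    Λ f ≤ C :=
  (hΛ f).trans (upperMean_le_of_le (lp.abs_re_apply_le_norm f) h)

lemma abs_apply_le_norm (f : lp (fun _ : G => 𝕜) ∞) : |Λ f| ≤ ‖f‖ := by
  have h := fun g : lp (fun _ : G => 𝕜) ∞ =>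
    hΛ.apply_le_of_forall_re_le fun t => (le_abs_self _).trans (lp.abs_re_apply_le_norm g t)
  rw [abs_le]
  constructor
  · exact neg_le.2 (by simpa using h (-f))
  · exact h f

lemma apply_eq_re_of_forall_eq {f : lp (fun _ : G => 𝕜) ∞} {c : 𝕜} (h : ∀ t, f t = c) :
    Λ f = re c := by
  have hneg : Λ (-f) ≤ -re c := hΛ.apply_le_of_forall_re_le fun t => by simp [h]
  rw [map_neg] at hneg
  exact le_antisymm (hΛ.apply_le_of_forall_re_le fun t => by rw [h]) (by linarith)

lemma apply_eq_of_forall_eq_add {f g : lp (fun _ : G => 𝕜) ∞} {s : G}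
    (h : ∀ t, g t = f (t + s)) : Λ g = Λ f := by
  have hgf : Λ (g - f) ≤ 0 := (hΛ _).trans <|
    (congrArg upperMean (funext fun t => by simp [h])).trans_le
      (upperMean_sub_translate_nonpos (lp.abs_re_apply_le_norm g) (-s))
  have hfg : Λ (f - g) ≤ 0 := (hΛ _).trans <|
    (congrArg upperMean (funext fun t => by simp [h])).trans_le
      (upperMean_sub_translate_nonpos (lp.abs_re_apply_le_norm f) s)
  rw [map_sub] at hgf hfg
  linarith

end IsDominatedByUpperMean

variable (𝕜 G) in
theorem exists_isInvariantMean : ∃ m, IsInvariantMean 𝕜 G m := by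
  obtain ⟨Λ, hΛ⟩ := exists_isDominatedByUpperMean 𝕜 G
  let Λc : StrongDual ℝ (lp (fun _ : G => 𝕜) ∞) :=
    Λ.mkContinuous 1 fun f => by simpa using hΛ.abs_apply_le_norm f
  refine ⟨StrongDual.extendRCLike Λc, ?_, fun f c hf => ?_, fun f g s hfg => ?_⟩
  · rw [StrongDual.norm_extendRCLike]
    exact LinearMap.mkContinuous_norm_le _ zero_le_one _
  · have hIf : ∀ t, ((I : 𝕜) • f) t = I * c := fun t => by simp [hf]
    apply RCLike.ext
    · simp [Λc, hΛ.apply_eq_re_of_forall_eq hf]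
    · simp [Λc, hΛ.apply_eq_re_of_forall_eq hIf]
  · have hIfg : ∀ t, ((I : 𝕜) • g) t = ((I : 𝕜) • f) (t + s) := fun t => by simp [hfg]
    simp only [StrongDual.extendRCLike_apply, Λc, LinearMap.mkContinuous_apply,
      hΛ.apply_eq_of_forall_eq_add hfg, hΛ.apply_eq_of_forall_eq_add hIfg]

end InvariantMean

section Averaging

variable {𝕜 E G : Type*} [RCLike 𝕜] [NormedAddCommGroup E] [NormedSpace 𝕜 E] [AddCommGroup G]
  {α : G → E →L[𝕜] E} (hα : ∀ t, ‖α t‖ ≤ 1) (T : (E →L[𝕜] 𝕜) →L[𝕜] (E →L[𝕜] 𝕜))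

include hα in
lemma norm_apply_comp_apply_neg_le (μ : E →L[𝕜] 𝕜) (x : E) (t : G) :
    ‖T (μ.comp (α t)) (α (-t) x)‖ ≤ ‖T‖ * ‖μ‖ * ‖x‖ := by
  have hμ : ‖μ.comp (α t)‖ ≤ ‖μ‖ :=
    (μ.opNorm_comp_le (α t)).trans (mul_le_of_le_one_right (norm_nonneg _) (hα t))
  have hx : ‖α (-t) x‖ ≤ ‖x‖ := by simpa using (α (-t)).le_of_opNorm_le (hα (-t)) x
  calc ‖T (μ.comp (α t)) (α (-t) x)‖ ≤ ‖T (μ.comp (α t))‖ * ‖α (-t) x‖ :=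
        ContinuousLinearMap.le_opNorm _ _
    _ ≤ ‖T‖ * ‖μ‖ * ‖x‖ := by gcongr; exact T.le_opNorm_of_le hμ

noncomputable def orbitCoeff (μ : E →L[𝕜] 𝕜) (x : E) : lp (fun _ : G => 𝕜) ∞ :=
  ⟨fun t => T (μ.comp (α t)) (α (-t) x),
    memℓp_infty ⟨‖T‖ * ‖μ‖ * ‖x‖, by
      rintro _ ⟨t, rfl⟩
      exact norm_apply_comp_apply_neg_le hα T μ x t⟩⟩

@[simp]
lemma orbitCoeff_apply (μ : E →L[𝕜] 𝕜) (x : E) (t : G) :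
    orbitCoeff hα T μ x t = T (μ.comp (α t)) (α (-t) x) := rfl

lemma norm_orbitCoeff_le (μ : E →L[𝕜] 𝕜) (x : E) :
    ‖orbitCoeff hα T μ x‖ ≤ ‖T‖ * ‖μ‖ * ‖x‖ :=
  lp.norm_le_of_forall_le (by positivity) (norm_apply_comp_apply_neg_le hα T μ x)

noncomputable def orbitCoeffₗ : (E →L[𝕜] 𝕜) →ₗ[𝕜] E →ₗ[𝕜] lp (fun _ : G => 𝕜) ∞ :=
  LinearMap.mk₂ 𝕜 (orbitCoeff hα T)
    (fun _ _ _ => lp.ext <| funext fun _ => by simp)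
    (fun _ _ _ => lp.ext <| funext fun _ => by simp)
    (fun _ _ _ => lp.ext <| funext fun _ => by simp)
    (fun _ _ _ => lp.ext <| funext fun _ => by simp)

@[simp]
lemma orbitCoeffₗ_apply (μ : E →L[𝕜] 𝕜) (x : E) :
    orbitCoeffₗ hα T μ x = orbitCoeff hα T μ x := rfl

variable (m : lp (fun _ : G => 𝕜) ∞ →L[𝕜] 𝕜)

noncomputable def average : (E →L[𝕜] 𝕜) →L[𝕜] (E →L[𝕜] 𝕜) :=
  ((orbitCoeffₗ hα T).compr₂ m.toLinearMap).mkContinuous₂ (‖m‖ * ‖T‖) fun μ x =>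
    (m.le_opNorm _).trans <| by
      simpa [mul_assoc] using
        mul_le_mul_of_nonneg_left (norm_orbitCoeff_le hα T μ x) (norm_nonneg m)

lemma average_apply (μ : E →L[𝕜] 𝕜) (x : E) :
    average hα T m μ x = m (orbitCoeff hα T μ x) := rfl

lemma norm_average_le : ‖average hα T m‖ ≤ ‖m‖ * ‖T‖ :=
  LinearMap.mkContinuous₂_norm_le _ (by positivity) _

lemma average_comp (hm : IsInvariantMean 𝕜 G m) (hα_add : ∀ s t x, α s (α t x) = α (s + t) x)
    (s : G) (μ : E →L[𝕜] 𝕜) : average hα T m (μ.comp (α s)) = (average hα T m μ).comp (α s) := by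
  ext x
  rw [ContinuousLinearMap.comp_apply, average_apply, average_apply]
  refine hm.map_translate _ _ s fun t => ?_
  have hcomp : (μ.comp (α s)).comp (α t) = μ.comp (α (t + s)) := by
    ext y
    simp [hα_add, add_comm]
  rw [orbitCoeff_apply, orbitCoeff_apply, hcomp, hα_add, show -(t + s) + s = -t by abel]

lemma average_apply_eq_zero {F : Set E} (hF : ∀ t, ∀ x ∈ F, α t x ∈ F)
    (hT : ∀ μ, ∀ x ∈ F, T μ x = 0) (μ : E →L[𝕜] 𝕜) {x : E} (hx : x ∈ F) :
    average hα T m μ x = 0 := by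
  have : orbitCoeff hα T μ x = 0 := lp.ext <| funext fun t => hT _ _ (hF (-t) x hx)
  rw [average_apply, this, map_zero]

lemma average_eq_self (hm : IsInvariantMean 𝕜 G m) (hα_zero : ∀ x, α 0 x = x)
    (hα_add : ∀ s t x, α s (α t x) = α (s + t) x) {F : Set E} (hF : ∀ t, ∀ x ∈ F, α t x ∈ F)
    (hT : ∀ μ : E →L[𝕜] 𝕜, (∀ x ∈ F, μ x = 0) → T μ = μ) {μ : E →L[𝕜] 𝕜}
    (hμ : ∀ x ∈ F, μ x = 0) : average hα T m μ = μ := by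
  ext x
  refine hm.map_const _ _ fun t => ?_
  rw [orbitCoeffₗ_apply, orbitCoeff_apply, hT _ fun y hy => hμ (α t y) (hF t y hy)]
  simp [hα_add, hα_zero]

end Averaging

lemma ContinuousLinearMap.one_le_opNorm_of_apply_eq_self {𝕜 X : Type*} [NontriviallyNormedField 𝕜]
    [NormedAddCommGroup X] [NormedSpace 𝕜 X] (p : X →L[𝕜] X) {v : X} (hv : v ≠ 0)
    (hpv : p v = v) : 1 ≤ ‖p‖ := by
  have h := p.le_opNorm v
  rw [hpv] at h
  exact (le_mul_iff_one_le_left (norm_pos_iff.2 hv)).1 h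

theorem stmt18_general {E : Type*} [NormedAddCommGroup E] [NormedSpace ℂ E]
    (α : ℝ → E →L[ℂ] E)
    (hiso : ∀ t : ℝ, ∀ x : E, ‖α t x‖ = ‖x‖)
    (h0 : ∀ x : E, α 0 x = x)
    (hgrp : ∀ t s : ℝ, ∀ x : E, α t (α s x) = α (t + s) x)
    (F : Submodule ℂ E)
    (hFinv : ∀ t : ℝ, ∀ x ∈ F, α t x ∈ F)
    (e : (E →L[ℂ] ℂ) →L[ℂ] (E →L[ℂ] ℂ))
    (he_ann : ∀ μ : E →L[ℂ] ℂ, ∀ x ∈ F, e μ x = 0)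
    (he_proj : ∀ μ : E →L[ℂ] ℂ, (∀ x ∈ F, μ x = 0) → e μ = μ)
    (he_norm : ‖e‖ = 1) :
    ∃ p : (E →L[ℂ] ℂ) →L[ℂ] (E →L[ℂ] ℂ),
      (∀ μ : E →L[ℂ] ℂ, ∀ x ∈ F, p μ x = 0) ∧
      (∀ μ : E →L[ℂ] ℂ, (∀ x ∈ F, μ x = 0) → p μ = μ) ∧
      ‖p‖ = 1 ∧
      ∀ (t : ℝ) (μ : E →L[ℂ] ℂ), p (μ.comp (α t)) = (p μ).comp (α t) := by
  have hα : ∀ t, ‖α t‖ ≤ 1 := fun t =>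
    (α t).opNorm_le_bound zero_le_one fun x => by rw [hiso, one_mul]
  obtain ⟨m, hm⟩ := exists_isInvariantMean ℂ ℝ
  have hfix : ∀ μ : E →L[ℂ] ℂ, (∀ x ∈ F, μ x = 0) → average hα e m μ = μ := fun _ hμ =>
    average_eq_self hα e m hm h0 hgrp hFinv he_proj hμ
  obtain ⟨μ₀, hμ₀⟩ : ∃ μ₀, e μ₀ ≠ 0 := by
    have he : e ≠ 0 := by
      rintro rfl
      exact zero_ne_one (ContinuousLinearMap.opNorm_zero.symm.trans he_norm)
    simpa using DFunLike.ne_iff.1 he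
  refine ⟨average hα e m, fun μ _ hx => average_apply_eq_zero hα e m hFinv he_ann μ hx, hfix,
    le_antisymm ?_ ((average hα e m).one_le_opNorm_of_apply_eq_self hμ₀ (hfix _ (he_ann μ₀))),
    average_comp hα e m hm hgrp⟩
  calc ‖average hα e m‖ ≤ ‖m‖ * ‖e‖ := norm_average_le hα e m
    _ ≤ 1 := by simpa [he_norm] using hm.norm_le_one

/-- Averaging a norm-one projection onto `F^⊥` over an invariant mean on `(ℝ, +)`:
if `F` is a closed `(αₜ)`-invariant subspace of `E` for a norm-continuous one-parameter
isometry group, and there exists a norm-one projection `e : E* → F^⊥`, then there exists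
a norm-one projection `p : E* → F^⊥` commuting with the adjoint group:
`p(μ ∘ αₜ) = (p μ) ∘ αₜ` for all `t`. -/
theorem stmt18 {E : Type*} [NormedAddCommGroup E] [NormedSpace ℂ E] [CompleteSpace E]
    (α : ℝ → E →L[ℂ] E)
    (hiso : ∀ t : ℝ, ∀ x : E, ‖α t x‖ = ‖x‖)
    (h0 : ∀ x : E, α 0 x = x)
    (hgrp : ∀ t s : ℝ, ∀ x : E, α t (α s x) = α (t + s) x)
    (hcont : ∀ x : E, Continuous fun t : ℝ => α t x)
    (F : Submodule ℂ E) (hFclosed : IsClosed (F : Set E))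
    (hFinv : ∀ t : ℝ, ∀ x ∈ F, α t x ∈ F)
    (e : (E →L[ℂ] ℂ) →L[ℂ] (E →L[ℂ] ℂ))
    (he_ann : ∀ μ : E →L[ℂ] ℂ, ∀ x ∈ F, e μ x = 0)
    (he_proj : ∀ μ : E →L[ℂ] ℂ, (∀ x ∈ F, μ x = 0) → e μ = μ)
    (he_norm : ‖e‖ = 1) :
    ∃ p : (E →L[ℂ] ℂ) →L[ℂ] (E →L[ℂ] ℂ),
      (∀ μ : E →L[ℂ] ℂ, ∀ x ∈ F, p μ x = 0) ∧
      (∀ μ : E →L[ℂ] ℂ, (∀ x ∈ F, μ x = 0) → p μ = μ) ∧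
      ‖p‖ = 1 ∧
      ∀ (t : ℝ) (μ : E →L[ℂ] ℂ), p (μ.comp (α t)) = (p μ).comp (α t) :=
  stmt18_general α hiso h0 hgrp F hFinv e he_ann he_proj he_norm
end
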